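/- Let n ≥ 3 and let ψ : ℝⁿ → ℝⁿ be continuous with compact support. Then ψ satisfies ψ(ϑy) = ϑψ(y) for every ϑ ∈ SO(n) and every y ∈ ℝⁿ \ {0} if and only if there exists a continuous function ξ : (0,∞) → ℝ with bounded support satisfying lim_{t→0⁺} ξ(t)·t = 0 such that ψ(y) = ξ(|y|)·y for every y ∈ ℝⁿ \ {0}. -/

import Mathlib

/-!
Equivariance forces `ψ y` onto the line `ℝ y`: for `n ≥ 3` and any `w ⊥ y`, `w ≠ 0`, the product
of the reflections in `w` and in some `u ⊥ y, w` is a rotation fixing `y` and negating `w`. As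
rotations act transitively on spheres, the factor depends only on `‖y‖` and can be read off
along a fixed unit vector `e` as `ξ t = ⟪ψ (t • e), e⟫ / t`. By continuity, equivariance extends
to `y = 0`, so `ψ 0 = 0`, which gives `ξ t * t → 0`; compact support of `ψ` bounds that of `ξ`.
Conversely, a radial field `ξ ‖y‖ • y` commutes with every linear isometry.
-/
open Filter Set Module Submodule
open scoped RealInnerProductSpace

variable {E : Type*} [NormedAddCommGroup E] [InnerProductSpace ℝ E]

def IsRotation (ϑ : E ≃ₗᵢ[ℝ] E) : Prop :=
  LinearMap.det (ϑ.toLinearEquiv : E →ₗ[ℝ] E) = 1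

theorem isRotation_refl : IsRotation (LinearIsometryEquiv.refl ℝ E) :=
  LinearMap.det_id

theorem isRotation_reflection_trans_reflection [FiniteDimensional ℝ E] {u w : E}
    (hu : u ≠ 0) (hw : w ≠ 0) :
    IsRotation ((reflection (ℝ ∙ u)ᗮ).trans (reflection (ℝ ∙ w)ᗮ)) := by
  have det_eq (v : E) (hv : v ≠ 0) : LinearMap.det (reflection (ℝ ∙ v)ᗮ).toLinearMap = -1 := by
    rw [det_reflection, orthogonal_orthogonal, finrank_span_singleton hv, pow_one]
  change LinearMap.det ((reflection (ℝ ∙ w)ᗮ).toLinearMap ∘ₗ (reflection (ℝ ∙ u)ᗮ).toLinearMap) = 1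
  rw [LinearMap.det_comp, det_eq u hu, det_eq w hw]
  norm_num

theorem reflection_orthogonalComplement_singleton_eq_self {u v : E} (h : ⟪u, v⟫ = 0) :
    reflection (ℝ ∙ u)ᗮ v = v :=
  reflection_mem_subspace_eq_self (mem_orthogonal_singleton_iff_inner_right.mpr h)

theorem exists_ne_zero_inner_eq_zero_of_two_lt_finrank [FiniteDimensional ℝ E]
    (h : 2 < finrank ℝ E) (y w : E) : ∃ u : E, u ≠ 0 ∧ ⟪u, y⟫ = 0 ∧ ⟪u, w⟫ = 0 := by
  classical
  set K := span ℝ ({y, w} : Set E)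
  have hK : K ≠ ⊤ := by
    intro hK
    have : finrank ℝ K ≤ 2 :=
      (finrank_span_le_card _).trans (by simpa using Finset.card_le_two)
    rw [hK, finrank_top] at this
    omega
  obtain ⟨u, hu, hu0⟩ := exists_mem_ne_zero_of_ne_bot (mt orthogonal_eq_bot_iff.mp hK)
  have hperp (x : E) (hx : x ∈ ({y, w} : Set E)) : ⟪u, x⟫ = 0 := by
    rw [real_inner_comm]; exact (mem_orthogonal K u).mp hu x (subset_span hx)
  exact ⟨u, hu0, hperp y (by simp), hperp w (by simp)⟩

theorem exists_isRotation_apply_eq [FiniteDimensional ℝ E] (h : 2 < finrank ℝ E) {y z : E}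
    (hyz : ‖y‖ = ‖z‖) : ∃ ϑ : E ≃ₗᵢ[ℝ] E, IsRotation ϑ ∧ ϑ y = z := by
  rcases eq_or_ne y z with rfl | hne
  · exact ⟨_, isRotation_refl, rfl⟩
  obtain ⟨u, hu0, huz, -⟩ := exists_ne_zero_inner_eq_zero_of_two_lt_finrank h z z
  refine ⟨(reflection (ℝ ∙ (y - z))ᗮ).trans (reflection (ℝ ∙ u)ᗮ),
    isRotation_reflection_trans_reflection (sub_ne_zero.mpr hne) hu0, ?_⟩
  rw [LinearIsometryEquiv.trans_apply, reflection_sub hyz,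
    reflection_orthogonalComplement_singleton_eq_self huz]

theorem mem_span_singleton_of_forall_isRotation [FiniteDimensional ℝ E] (h : 2 < finrank ℝ E)
    {y v : E} (hfix : ∀ σ : E ≃ₗᵢ[ℝ] E, IsRotation σ → σ y = y → σ v = v) : v ∈ ℝ ∙ y := by
  obtain ⟨c, hc⟩ := mem_span_singleton.mp (starProjection_apply_mem (ℝ ∙ y) v)
  set w := v - c • y with hw_def
  have hv : v = c • y + w := (add_sub_cancel _ v).symm
  have hwy : ⟪w, y⟫ = 0 := by
    rw [real_inner_comm, ← mem_orthogonal_singleton_iff_inner_right, hw_def, hc]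
    exact sub_starProjection_mem_orthogonal v
  by_contra hvy
  have hw : w ≠ 0 := fun hw => hvy (by rw [hv, hw, add_zero]; exact mem_span_singleton.mpr ⟨c, rfl⟩)
  obtain ⟨u, hu0, huy, huw⟩ := exists_ne_zero_inner_eq_zero_of_two_lt_finrank h y w
  set σ := (reflection (ℝ ∙ w)ᗮ).trans (reflection (ℝ ∙ u)ᗮ)
  have hσy : σ y = y := by
    rw [LinearIsometryEquiv.trans_apply, reflection_orthogonalComplement_singleton_eq_self hwy,
      reflection_orthogonalComplement_singleton_eq_self huy]
  have hσw : σ w = -w := by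
    rw [LinearIsometryEquiv.trans_apply, reflection_orthogonalComplement_singleton_eq_neg, map_neg,
      reflection_orthogonalComplement_singleton_eq_self huw]
  have hσv : σ v = v := hfix σ (isRotation_reflection_trans_reflection hw hu0) hσy
  rw [hv, map_add, map_smul, hσy, hσw, add_right_inj, neg_eq_iff_add_eq_zero, ← two_smul ℝ,
    smul_eq_zero] at hσv
  exact hw (hσv.resolve_left two_ne_zero)

section Equivariant

variable {ψ : E → E}

theorem apply_isRotation_eq_of_continuous [Nontrivial E] (hc : Continuous ψ)
    (H : ∀ ϑ : E ≃ₗᵢ[ℝ] E, IsRotation ϑ → ∀ y, y ≠ 0 → ψ (ϑ y) = ϑ (ψ y))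
    {ϑ : E ≃ₗᵢ[ℝ] E} (hϑ : IsRotation ϑ) (y : E) : ψ (ϑ y) = ϑ (ψ y) :=
  congrFun (Continuous.ext_on (dense_compl_singleton (0 : E)) (hc.comp ϑ.continuous)
    (ϑ.continuous.comp hc) (H ϑ hϑ)) y

theorem exists_smul_of_apply_isRotation_eq [FiniteDimensional ℝ E] (h : 2 < finrank ℝ E)
    (H : ∀ ϑ : E ≃ₗᵢ[ℝ] E, IsRotation ϑ → ∀ y, ψ (ϑ y) = ϑ (ψ y)) (y : E) :
    ∃ a : ℝ, ψ y = a • y := by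
  obtain ⟨a, ha⟩ := mem_span_singleton.mp <| mem_span_singleton_of_forall_isRotation h
    fun σ hσ hσy => by rw [← H σ hσ, hσy]
  exact ⟨a, ha.symm⟩

noncomputable def radialProfile (ψ : E → E) (e : E) (t : ℝ) : ℝ := ⟪ψ (t • e), e⟫ / t

theorem apply_eq_radialProfile_smul [FiniteDimensional ℝ E] (h : 2 < finrank ℝ E)
    (H : ∀ ϑ : E ≃ₗᵢ[ℝ] E, IsRotation ϑ → ∀ y, ψ (ϑ y) = ϑ (ψ y)) {e y : E} (he : ‖e‖ = 1)
    (hy : y ≠ 0) : ψ y = radialProfile ψ e ‖y‖ • y := by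
  obtain ⟨a, ha⟩ := exists_smul_of_apply_isRotation_eq h H (‖y‖ • e)
  obtain ⟨ϑ, hϑ, hϑy⟩ := exists_isRotation_apply_eq h (y := ‖y‖ • e) (z := y)
    (by rw [norm_smul, he, norm_norm, mul_one])
  have hprofile : radialProfile ψ e ‖y‖ = a := by
    rw [radialProfile, ha, real_inner_smul_left, real_inner_smul_left, real_inner_self_eq_norm_sq,
      he]
    field_simp
  rw [hprofile, ← hϑy, H ϑ hϑ, ha, map_smul]

theorem continuous_inner_apply_smul (hc : Continuous ψ) (e : E) :
    Continuous fun t : ℝ => ⟪ψ (t • e), e⟫ := by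
  fun_prop

theorem continuousOn_radialProfile (hc : Continuous ψ) (e : E) :
    ContinuousOn (radialProfile ψ e) (Ioi 0) :=
  (continuous_inner_apply_smul hc e).continuousOn.div
    continuousOn_id fun _ ht => ne_of_gt ht

theorem exists_radialProfile_eq_zero (hs : HasCompactSupport ψ) {e : E} (he : ‖e‖ = 1) :
    ∃ R : ℝ, 0 < R ∧ ∀ t : ℝ, R < t → radialProfile ψ e t = 0 := by
  obtain ⟨R, hR, hψR⟩ := hs.exists_pos_le_norm
  refine ⟨R, hR, fun t ht => ?_⟩
  have : ψ (t • e) = 0 := hψR _ <| by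
    rw [norm_smul, he, mul_one, Real.norm_of_nonneg (hR.trans ht).le]; exact ht.le
  rw [radialProfile, this, inner_zero_left, zero_div]

theorem tendsto_radialProfile_mul (hc : Continuous ψ) (hψ0 : ψ 0 = 0) (e : E) :
    Tendsto (fun t => radialProfile ψ e t * t) (nhdsWithin 0 (Ioi 0)) (nhds 0) := by
  have hlim : Tendsto (fun t : ℝ => ⟪ψ (t • e), e⟫) (nhds 0) (nhds 0) := by
    simpa [hψ0] using (continuous_inner_apply_smul hc e).tendsto 0
  refine (hlim.mono_left nhdsWithin_le_nhds).congr' ?_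
  filter_upwards [self_mem_nhdsWithin] with t ht
  rw [radialProfile, div_mul_cancel₀ _ (ne_of_gt ht)]

end Equivariant

theorem stmt1 {n : ℕ} (hn : 3 ≤ n)
    (ψ : EuclideanSpace ℝ (Fin n) → EuclideanSpace ℝ (Fin n))
    (hc : Continuous ψ) (hs : HasCompactSupport ψ) :
    (∀ ϑ : EuclideanSpace ℝ (Fin n) ≃ₗᵢ[ℝ] EuclideanSpace ℝ (Fin n),
        LinearMap.det (ϑ.toLinearEquiv : EuclideanSpace ℝ (Fin n) →ₗ[ℝ] EuclideanSpace ℝ (Fin n)) = 1 →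
        ∀ y : EuclideanSpace ℝ (Fin n), y ≠ 0 → ψ (ϑ y) = ϑ (ψ y)) ↔
      (∃ ξ : ℝ → ℝ, ContinuousOn ξ (Set.Ioi 0) ∧
        (∃ R : ℝ, 0 < R ∧ ∀ t : ℝ, R < t → ξ t = 0) ∧
        Tendsto (fun t : ℝ => ξ t * t) (nhdsWithin 0 (Set.Ioi 0)) (nhds 0) ∧
        ∀ y : EuclideanSpace ℝ (Fin n), y ≠ 0 → ψ y = ξ ‖y‖ • y) := by
  have h2 : 2 < finrank ℝ (EuclideanSpace ℝ (Fin n)) := by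
    rw [finrank_euclideanSpace_fin]; omega
  have : Nontrivial (EuclideanSpace ℝ (Fin n)) :=
    Module.nontrivial_of_finrank_pos (R := ℝ) (by omega)
  constructor
  · intro H
    have hequiv := fun ϑ (hϑ : IsRotation ϑ) => apply_isRotation_eq_of_continuous hc H hϑ
    obtain ⟨a, hψ0⟩ := exists_smul_of_apply_isRotation_eq h2 hequiv 0
    obtain ⟨e, he⟩ := exists_norm_eq (EuclideanSpace ℝ (Fin n)) zero_le_one
    exact ⟨radialProfile ψ e, continuousOn_radialProfile hc e, exists_radialProfile_eq_zero hs he,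
      tendsto_radialProfile_mul hc (by rw [hψ0, smul_zero]) e,
      fun y hy => apply_eq_radialProfile_smul h2 hequiv he hy⟩
  · rintro ⟨ξ, -, -, -, hξ⟩ ϑ - y hy
    rw [hξ (ϑ y) (ϑ.map_ne_zero_iff.mpr hy), hξ y hy, ϑ.norm_map, map_smul]
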